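/- Every continuous group homomorphism φ : ℂˣ → ℂˣ is of the form φ(z) = |z|^(a+b) · (z/|z|)^(a−b) for unique complex numbers a, b with a − b ∈ ℤ. Conversely, for any a, b ∈ ℂ with a − b ∈ ℤ, the map z ↦ |z|^(a+b) · (z/|z|)^(a−b) is a continuous group homomorphism ℂˣ → ℂˣ. -/

import Mathlib

/-!
The map `w ↦ φ (exp w)` is a continuous map from the simply connected plane into `ℂ \ {0}`, so it
lifts through the covering map `exp` to a continuous `L : ℂ → ℂ` with `L 0 = 0`. Uniqueness of
lifts makes `L` additive, hence `ℝ`-linear, so `L w = L 1 · Re w + L i · Im w`; since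
`exp (2π L i) = φ (exp 2πi) = 1`, we get `L i = n i` with `n ∈ ℤ`, and then
`φ z = exp (L (log z)) = |z|^(L 1) (z/|z|)^n`. Uniqueness of the exponents is again uniqueness of
lifts through `exp`.
-/

/-- The "z^a · z̄^b" character of ℂˣ: `|z|^(a+b) · (z/|z|)^(a-b)`, where the
first power is a complex power of the positive real `|z|` and the second is the
integer power `n = a - b` of the unit complex number `z/|z|`. -/
noncomputable def charForm (a b : ℂ) (n : ℤ) (z : ℂ) : ℂ :=
  ((‖z‖ : ℂ)) ^ (a + b) * (z / (‖z‖ : ℂ)) ^ n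

namespace Complex

theorem eq_of_cexp_comp_eq {A : Type*} [TopologicalSpace A] [PreconnectedSpace A] {f g : A → ℂ}
    (hf : Continuous f) (hg : Continuous g) (h : ∀ a, exp (f a) = exp (g a)) (a₀ : A)
    (h₀ : f a₀ = g a₀) : f = g :=
  isCoveringMap_exp.eq_of_comp_eq hf hg (funext fun a => Subtype.ext (h a)) a₀ h₀

theorem exists_continuous_cexp_lift {A : Type*} [TopologicalSpace A] [SimplyConnectedSpace A]
    [LocallyPathConnectedSpace A] {f : A → ℂ} (hf : Continuous f) (hf₀ : ∀ a, f a ≠ 0) (a₀ : A)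
    {e₀ : ℂ} (he₀ : exp e₀ = f a₀) :
    ∃ F : A → ℂ, Continuous F ∧ F a₀ = e₀ ∧ ∀ a, exp (F a) = f a := by
  obtain ⟨F, ⟨hF₀, hF⟩, -⟩ :=
    isCoveringMapOn_exp.existsUnique_continuousMap_lifts ⟨f, hf⟩ he₀ hf₀
  exact ⟨F, F.continuous, hF₀, congrFun hF⟩

theorem exists_continuousLinearMap_cexp_eq_of_map_add {E : Type*} [AddCommGroup E] [Module ℝ E]
    [TopologicalSpace E] [IsTopologicalAddGroup E] [ContinuousSMul ℝ E] [LocallyConvexSpace ℝ E]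
    {f : E → ℂ} (hf : Continuous f) (hf₀ : f 0 = 1) (hf_add : ∀ x y, f (x + y) = f x * f y) :
    ∃ L : E →L[ℝ] ℂ, ∀ x, f x = exp (L x) := by
  have hf_ne : ∀ x, f x ≠ 0 := fun x hx => by simpa [hx, hf₀] using hf_add x (-x)
  obtain ⟨F, hF_cont, hF₀, hF⟩ := exists_continuous_cexp_lift hf hf_ne 0 (e₀ := 0) (by simp [hf₀])
  -- both sides lift `x ↦ f (x + y)` through `exp` and agree at `x = 0`
  have hF_add : ∀ x y, F (x + y) = F x + F y := fun x y =>
    congrFun (eq_of_cexp_comp_eq (f := fun x => F (x + y)) (g := fun x => F x + F y)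
      (by fun_prop) (by fun_prop) (fun x => by rw [exp_add, hF, hF, hF, hf_add]) 0
      (by simp [hF₀])) x
  exact ⟨AddMonoidHom.toRealLinearMap (AddMonoidHom.mk' F hF_add) hF_cont, fun x => (hF x).symm⟩

theorem map_eq_re_smul_add_im_smul {M F : Type*} [AddCommGroup M] [Module ℝ M] [FunLike F ℂ M]
    [LinearMapClass F ℝ ℂ M] (L : F) (w : ℂ) : L w = w.re • L 1 + w.im • L I := by
  conv_lhs => rw [show w = w.re • (1 : ℂ) + w.im • I by simp]
  rw [map_add, map_smul, map_smul]

theorem eq_and_eq_of_cexp_re_im_eq {c c' : ℂ} {n n' : ℤ}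
    (h : ∀ w : ℂ, exp (c * w.re + n * w.im * I) = exp (c' * w.re + n' * w.im * I)) :
    c = c' ∧ n = n' := by
  have hlift := eq_of_cexp_comp_eq (by fun_prop) (by fun_prop) h 0 (by simp)
  have h₁ := congrFun hlift 1
  have h_I := congrFun hlift I
  simp only [one_re, one_im, I_re, I_im, ofReal_one, ofReal_zero, mul_one, mul_zero,
    zero_mul, add_zero, zero_add] at h₁ h_I
  exact ⟨h₁, by exact_mod_cast mul_right_cancel₀ I_ne_zero h_I⟩

noncomputable def expUnit (w : ℂ) : ℂˣ :=
  Units.mk0 (exp w) (exp_ne_zero w)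

@[simp]
theorem coe_expUnit (w : ℂ) : (expUnit w : ℂ) = exp w := rfl

theorem expUnit_add (w w' : ℂ) : expUnit (w + w') = expUnit w * expUnit w' :=
  Units.ext (exp_add w w')

theorem expUnit_surjective : Function.Surjective expUnit :=
  fun z => ⟨log z, Units.ext (exp_log z.ne_zero)⟩

theorem continuous_expUnit : Continuous expUnit :=
  Units.isEmbedding_val₀.continuous_iff.2 continuous_exp

theorem exists_map_expUnit_eq_cexp (φ : ℂˣ →* ℂˣ) (hφ : Continuous fun z : ℂˣ => (φ z : ℂ)) :
    ∃ (c : ℂ) (n : ℤ), ∀ w : ℂ, (φ (expUnit w) : ℂ) = exp (c * w.re + n * w.im * I) := by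
  obtain ⟨L, hL⟩ := exists_continuousLinearMap_cexp_eq_of_map_add
    (f := fun w => (φ (expUnit w) : ℂ)) (hφ.comp continuous_expUnit)
    (by simp [show expUnit 0 = 1 from Units.ext exp_zero]) (fun w w' => by simp [expUnit_add])
  have h_period : exp ((2 * Real.pi : ℝ) • L I) = 1 := by
    rw [← map_smul, ← hL, real_smul, ofReal_mul, ofReal_ofNat,
      show expUnit (2 * Real.pi * I) = 1 from Units.ext exp_two_pi_mul_I, map_one, Units.val_one]
  obtain ⟨n, hn⟩ := exp_eq_one_iff.1 h_period
  have hLI : L I = n * I := by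
    rw [real_smul, ofReal_mul, ofReal_ofNat] at hn
    exact mul_left_cancel₀ (by simp [Real.pi_ne_zero]) (hn.trans (by ring))
  refine ⟨L 1, n, fun w => ?_⟩
  rw [hL, map_eq_re_smul_add_im_smul L w, hLI, real_smul, real_smul]
  ring_nf

end Complex

open Complex

theorem charForm_exp (a b : ℂ) (n : ℤ) (w : ℂ) :
    charForm a b n (exp w) = exp ((a + b) * w.re + n * w.im * I) := by
  have h_re : (‖exp w‖ : ℂ) = exp w.re := by rw [norm_exp, ofReal_exp]
  rw [charForm, h_re, cpow_def_of_ne_zero (exp_ne_zero _), log_exp (by simp [Real.pi_pos])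
    (by simp [Real.pi_pos.le]), ← exp_sub, ← exp_int_mul, ← exp_add]
  congr 1
  linear_combination -(n : ℂ) * re_add_im w

theorem forall_units_eq_charForm_iff (g : ℂˣ → ℂ) (a b : ℂ) (n : ℤ) :
    (∀ z : ℂˣ, g z = charForm a b n z) ↔
      ∀ w : ℂ, g (expUnit w) = exp ((a + b) * w.re + n * w.im * I) := by
  simp_rw [← charForm_exp, ← coe_expUnit]
  exact expUnit_surjective.forall

theorem continuous_charForm (a b : ℂ) (n : ℤ) : Continuous fun z : ℂˣ => charForm a b n z := by
  have h_ne : ∀ z : ℂˣ, (‖(z : ℂ)‖ : ℂ) ≠ 0 := by simp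
  refine .mul (.cpow (by fun_prop) continuous_const fun z => by simp) ?_
  exact .zpow₀ (by fun_prop (disch := exact h_ne)) n fun z => by simp

theorem charForm_units_ne_zero (a b : ℂ) (n : ℤ) (z : ℂˣ) : charForm a b n z ≠ 0 := by
  obtain ⟨w, rfl⟩ := expUnit_surjective z
  rw [coe_expUnit, charForm_exp]
  exact exp_ne_zero _

theorem charForm_units_mul (a b : ℂ) (n : ℤ) (z z' : ℂˣ) :
    charForm a b n (z * z' : ℂˣ) = charForm a b n z * charForm a b n z' := by
  obtain ⟨w, rfl⟩ := expUnit_surjective z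
  obtain ⟨w', rfl⟩ := expUnit_surjective z'
  simp only [← expUnit_add, coe_expUnit, charForm_exp, ← exp_add, add_re, add_im, ofReal_add]
  ring_nf

noncomputable def charFormHom (a b : ℂ) (n : ℤ) : ℂˣ →* ℂˣ :=
  MonoidHom.mk' (fun z => Units.mk0 _ (charForm_units_ne_zero a b n z))
    fun z z' => Units.ext (charForm_units_mul a b n z z')

/-- Every continuous group homomorphism `ℂˣ → ℂˣ` is of the form
`z ↦ |z|^(a+b) (z/|z|)^(a-b)` for unique `a b : ℂ` with `a - b ∈ ℤ`, and
conversely every such formula defines a continuous group homomorphism. -/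
theorem continuous_units_complex_hom_classification :
    (∀ φ : ℂˣ →* ℂˣ, Continuous (fun z : ℂˣ => (φ z : ℂ)) →
      ∃! ab : ℂ × ℂ, ∃ n : ℤ, ab.1 - ab.2 = (n : ℂ) ∧
        ∀ z : ℂˣ, (φ z : ℂ) = charForm ab.1 ab.2 n (z : ℂ)) ∧
    (∀ (a b : ℂ) (n : ℤ), a - b = (n : ℂ) →
      ∃ φ : ℂˣ →* ℂˣ, Continuous (fun z : ℂˣ => (φ z : ℂ)) ∧
        ∀ z : ℂˣ, (φ z : ℂ) = charForm a b n (z : ℂ)) := by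
  refine ⟨fun φ hφ => ?_, fun a b n _ =>
    ⟨charFormHom a b n, continuous_charForm a b n, fun _ => rfl⟩⟩
  obtain ⟨c, n, hφ_exp⟩ := exists_map_expUnit_eq_cexp φ hφ
  refine ⟨((c + n) / 2, (c - n) / 2), ⟨n, by ring, ?_⟩, ?_⟩
  · exact (forall_units_eq_charForm_iff _ _ _ n).2 fun w => by rw [hφ_exp]; ring_nf
  · rintro ⟨a, b⟩ ⟨m, hab, hφ_char⟩
    obtain ⟨hsum, rfl⟩ := eq_and_eq_of_cexp_re_im_eq fun w =>
      ((forall_units_eq_charForm_iff _ _ _ m).1 hφ_char w).symm.trans (hφ_exp w)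
    ext
    · linear_combination (hsum + hab) / 2
    · linear_combination (hsum - hab) / 2
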